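/- arXiv:2205.12081 — 5 statements merged into one kernel-verified Lean document; each statement's English description precedes it below -/
import Mathlib

section
/- For every b > 0 and every function F : ℝ → ℝ, the frequency polygon B_b F : ℝ → ℝ is continuous on all of ℝ. -/
open Filter MeasureTheory ProbabilityTheory

/-- The binning (histogram) operator: `A_b F (x) = (F((k+1)b) - F(kb))/b` for
`x ∈ [kb, (k+1)b)`, where `k = ⌊x/b⌋`. -/
noncomputable def abin (b : ℝ) (F : ℝ → ℝ) (x : ℝ) : ℝ :=
  (F (((⌊x / b⌋ : ℝ) + 1) * b) - F ((⌊x / b⌋ : ℝ) * b)) / b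

/-- The interpolation weight `u_b(x) = x/b - (⌊x/b - 1/2⌋ + ⌊x/b + 1/2⌋)/2`. -/
noncomputable def ub (b x : ℝ) : ℝ :=
  x / b - ((⌊x / b - 1 / 2⌋ : ℝ) + (⌊x / b + 1 / 2⌋ : ℝ)) / 2

/-- The frequency polygon operator
`B_b F (x) = (1 - u_b(x)) A_b F (x - b/2) + u_b(x) A_b F (x + b/2)`. -/
noncomputable def bfp (b : ℝ) (F : ℝ → ℝ) (x : ℝ) : ℝ :=
  (1 - ub b x) * abin b F (x - b / 2) + ub b x * abin b F (x + b / 2)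

/-!
Shifting by half a bin, `s = x/b - 1/2`, both bins `⌊(x ∓ b/2)/b⌋` become `⌊s⌋` and `⌊s⌋ + 1`
and the weight `u_b(x)` becomes `fract s`. So `B_b F` is the piecewise-linear interpolation,
rescaled, of the sequence of bin heights `k ↦ (F((k+1)b) - F(kb))/b`; such an interpolation is
affine on every `[n, n+1]`, and these closed intervals form a locally finite cover of `ℝ`.
-/

open Set AffineMap

theorem continuous_of_continuousOn_Icc_intCast {X : Type*} [TopologicalSpace X] {f : ℝ → X}
    (hf : ∀ n : ℤ, ContinuousOn f (Icc (n : ℝ) (n + 1))) : Continuous f :=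
  LocallyFinite.continuous
    (locallyFinite_Icc_of_tendsto tendsto_intCast_atTop_atTop
      (tendsto_atBot_add_const_right _ 1 (tendsto_intCast_atBot_iff.2 tendsto_id)))
    (iUnion_Icc_intCast ℝ) (fun _ => isClosed_Icc) hf

section IntLerp

variable {E : Type*} [AddCommGroup E] [Module ℝ E]

noncomputable def intLerp (c : ℤ → E) (s : ℝ) : E :=
  lineMap (c ⌊s⌋) (c (⌊s⌋ + 1)) (Int.fract s)

theorem intLerp_eqOn_Icc (c : ℤ → E) (n : ℤ) :
    EqOn (intLerp c) (fun s => lineMap (c n) (c (n + 1)) (s - n)) (Icc (n : ℝ) (n + 1)) := by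
  rintro s ⟨hns, hsn⟩
  rcases hsn.lt_or_eq with hsn | rfl
  · have hfloor : ⌊s⌋ = n := Int.floor_eq_iff.2 ⟨hns, hsn⟩
    simp [intLerp, Int.fract, hfloor]
  · have hfloor : ⌊(n : ℝ) + 1⌋ = n + 1 := mod_cast Int.floor_intCast (n + 1)
    simp [intLerp, hfloor]

variable [TopologicalSpace E] [IsTopologicalAddGroup E] [ContinuousSMul ℝ E]

theorem continuous_intLerp (c : ℤ → E) : Continuous (intLerp c) :=
  continuous_of_continuousOn_Icc_intCast fun n =>
    ((lineMap_continuous.comp (continuous_sub_right _)).continuousOn).congr (intLerp_eqOn_Icc c n)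

end IntLerp

theorem bfp_eq_intLerp {b : ℝ} (hb : b ≠ 0) (F : ℝ → ℝ) (x : ℝ) :
    bfp b F x = intLerp (fun k : ℤ => (F ((k + 1) * b) - F (k * b)) / b) (x / b - 1 / 2) := by
  have hleft : (x - b / 2) / b = x / b - 1 / 2 := by field_simp
  have hright : (x + b / 2) / b = x / b - 1 / 2 + 1 := by field_simp; ring
  have hweight : ub b x = Int.fract (x / b - 1 / 2) := by
    rw [ub, show x / b + 1 / 2 = x / b - 1 / 2 + 1 by ring, Int.floor_add_one, Int.fract]
    push_cast
    ring
  rw [bfp, hweight, abin, abin, hleft, hright, Int.floor_add_one, intLerp, lineMap_apply_module]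
  push_cast
  simp only [smul_eq_mul]

/-- The frequency polygon `B_b F` is continuous on all of `ℝ`. -/
theorem frequency_polygon_continuous (b : ℝ) (hb : 0 < b) (F : ℝ → ℝ) :
    Continuous (bfp b F) := by
  rw [funext (bfp_eq_intLerp hb.ne' F)]
  exact (continuous_intLerp _).comp ((continuous_id.div_const b).sub continuous_const)
end

section
/- Let b > 0, let G : ℝ → ℝ be any function and f : ℝ → ℝ any bounded function. Then ‖B_b G − f‖_∞ ≤ 2·‖A_b G − f‖_∞ + ‖f(· − b/2) − f‖_∞ + ‖f(· + b/2) − f‖_∞, where ‖·‖_∞ denotes the supremum norm over ℝ. -/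
open Filter MeasureTheory ProbabilityTheory

lemma ub_mem (b x : ℝ) : 0 ≤ ub b x ∧ ub b x ≤ 1 := by
  unfold ub
  have h1 := Int.floor_le (x / b - 1 / 2)
  have h2 := Int.floor_le (x / b + 1 / 2)
  have h3 := Int.sub_one_lt_floor (x / b - 1 / 2)
  have h4 := Int.sub_one_lt_floor (x / b + 1 / 2)
  constructor <;> linarith

/-- `‖B_b G - f‖_∞ ≤ 2 ‖A_b G - f‖_∞ + ‖f(· - b/2) - f‖_∞ + ‖f(· + b/2) - f‖_∞`,
stated pointwise with arbitrary upper bounds for the three sup-norms on the right. -/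
theorem bfp_error_bound (b : ℝ) (hb : 0 < b) (G f : ℝ → ℝ) (M₁ M₂ M₃ : ℝ)
    (h1 : ∀ x : ℝ, |abin b G x - f x| ≤ M₁)
    (h2 : ∀ x : ℝ, |f (x - b / 2) - f x| ≤ M₂)
    (h3 : ∀ x : ℝ, |f (x + b / 2) - f x| ≤ M₃) :
    ∀ x : ℝ, |bfp b G x - f x| ≤ 2 * M₁ + M₂ + M₃ := by
  intro x
  obtain ⟨hu0, hu1⟩ := ub_mem b x
  set u := ub b x
  have hM1 : 0 ≤ M₁ := le_trans (abs_nonneg _) (h1 0)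
  have hM2 : 0 ≤ M₂ := le_trans (abs_nonneg _) (h2 0)
  have hM3 : 0 ≤ M₃ := le_trans (abs_nonneg _) (h3 0)
  have key : bfp b G x - f x =
      ((1 - u) * (abin b G (x - b / 2) - f (x - b / 2))
        + u * (abin b G (x + b / 2) - f (x + b / 2)))
      + ((1 - u) * (f (x - b / 2) - f x) + u * (f (x + b / 2) - f x)) := by
    unfold bfp; ring
  have b1 : |(1 - u) * (abin b G (x - b / 2) - f (x - b / 2))| ≤ (1 - u) * M₁ := by
    rw [abs_mul, abs_of_nonneg (by linarith)]
    exact mul_le_mul_of_nonneg_left (h1 _) (by linarith)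
  have b2 : |u * (abin b G (x + b / 2) - f (x + b / 2))| ≤ u * M₁ := by
    rw [abs_mul, abs_of_nonneg hu0]
    exact mul_le_mul_of_nonneg_left (h1 _) hu0
  have b3 : |(1 - u) * (f (x - b / 2) - f x)| ≤ (1 - u) * M₂ := by
    rw [abs_mul, abs_of_nonneg (by linarith)]
    exact mul_le_mul_of_nonneg_left (h2 _) (by linarith)
  have b4 : |u * (f (x + b / 2) - f x)| ≤ u * M₃ := by
    rw [abs_mul, abs_of_nonneg hu0]
    exact mul_le_mul_of_nonneg_left (h3 _) hu0
  rw [key]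
  have := abs_add_le ((1 - u) * (abin b G (x - b / 2) - f (x - b / 2)))
    (u * (abin b G (x + b / 2) - f (x + b / 2)))
  have := abs_add_le ((1 - u) * (f (x - b / 2) - f x)) (u * (f (x + b / 2) - f x))
  have := abs_add_le ((1 - u) * (abin b G (x - b / 2) - f (x - b / 2))
        + u * (abin b G (x + b / 2) - f (x + b / 2)))
      ((1 - u) * (f (x - b / 2) - f x) + u * (f (x + b / 2) - f x))
  nlinarith [mul_nonneg hu0 hM2, mul_nonneg (by linarith : (0:ℝ) ≤ 1 - u) hM3]
end

section
/- Let b > 0, let f : ℝ → ℝ be bounded and Lipschitz continuous with constant L ≥ 0, and let F : ℝ → ℝ satisfy F(y) − F(x) = ∫_x^y f(s) ds for all x ≤ y. Then ‖B_b F − f‖_∞ ≤ 3·L·b, where ‖·‖_∞ denotes the supremum norm over ℝ. -/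
/-!
`B_b F(x)` is a convex combination of the bin averages of `f = F'` over the bins containing
`x - b/2` and `x + b/2`. Each of these bins lies within distance `3b/2` of `x`, so by the
Lipschitz bound each average is within `3Lb/2` of `f x`, and hence so is the convex combination.
-/

open Filter MeasureTheory ProbabilityTheory

lemma ub_eq_fract (b x : ℝ) : ub b x = Int.fract (x / b - 1 / 2) := by
  have hfloor : ⌊x / b + 1 / 2⌋ = ⌊x / b - 1 / 2⌋ + 1 := by
    rw [← Int.floor_add_one]; ring_nf
  rw [ub, hfloor, ← Int.self_sub_floor]
  push_cast
  ring

lemma ub_mem_Ico (b x : ℝ) : ub b x ∈ Set.Ico (0 : ℝ) 1 :=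
  ub_eq_fract b x ▸ ⟨Int.fract_nonneg _, Int.fract_lt_one _⟩

lemma floor_div_mul_le {b : ℝ} (hb : 0 < b) (y : ℝ) : (⌊y / b⌋ : ℝ) * b ≤ y :=
  (le_div_iff₀ hb).mp (Int.floor_le _)

lemma lt_floor_div_add_one_mul {b : ℝ} (hb : 0 < b) (y : ℝ) : y < ((⌊y / b⌋ : ℝ) + 1) * b :=
  (div_lt_iff₀ hb).mp (Int.lt_floor_add_one _)

lemma abin_eq_integral_div {b : ℝ} (hb : 0 < b) {f F : ℝ → ℝ}
    (hF : ∀ x y : ℝ, x ≤ y → F y - F x = ∫ s in x..y, f s) (y : ℝ) :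
    abin b F y = (∫ s in (⌊y / b⌋ : ℝ) * b..((⌊y / b⌋ : ℝ) + 1) * b, f s) / b := by
  rw [abin, hF _ _ (by nlinarith)]

lemma abs_integral_div_sub_le {f : ℝ → ℝ} {a c v C : ℝ} (hac : a < c)
    (hf : IntervalIntegrable f volume a c) (hC : ∀ s ∈ Set.Ioc a c, |f s - v| ≤ C) :
    |(∫ s in a..c, f s) / (c - a) - v| ≤ C := by
  have hpos : 0 < c - a := sub_pos.mpr hac
  have hint : ∫ s in a..c, (f s - v) = (∫ s in a..c, f s) - (c - a) * v := by
    rw [intervalIntegral.integral_sub hf intervalIntegrable_const,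
      intervalIntegral.integral_const, smul_eq_mul]
  have hbound : ‖∫ s in a..c, (f s - v)‖ ≤ C * |c - a| :=
    intervalIntegral.norm_integral_le_of_norm_le_const fun s hs =>
      hC s (Set.uIoc_of_le hac.le ▸ hs)
  rw [Real.norm_eq_abs, abs_of_pos hpos, hint] at hbound
  rwa [div_sub' hpos.ne', abs_div, abs_of_pos hpos, div_le_iff₀ hpos]

lemma abs_abin_sub_le {b L : ℝ} (hb : 0 < b) (hL : 0 ≤ L) {f F : ℝ → ℝ}
    (hf : ∀ x y : ℝ, |f x - f y| ≤ L * |x - y|)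
    (hF : ∀ x y : ℝ, x ≤ y → F y - F x = ∫ s in x..y, f s) (x y : ℝ) :
    |abin b F y - f x| ≤ L * (|y - x| + b) := by
  set k : ℝ := (⌊y / b⌋ : ℝ)
  have hky : k * b ≤ y := floor_div_mul_le hb y
  have hyk : y < (k + 1) * b := lt_floor_div_add_one_mul hb y
  have hcont : Continuous f :=
    (LipschitzWith.of_dist_le' fun s t => by simpa only [Real.dist_eq] using hf s t).continuous
  have hlen : (k + 1) * b - k * b = b := by ring
  have hbin := abs_integral_div_sub_le (v := f x) (C := L * (|y - x| + b))
    (by linarith : k * b < (k + 1) * b) (hcont.intervalIntegrable _ _) fun s hs => by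
      have hsy : |s - y| ≤ b := abs_le.mpr ⟨by linarith [hs.1], by linarith [hs.2]⟩
      calc |f s - f x| ≤ L * |s - x| := hf s x
        _ ≤ L * (|s - y| + |y - x|) := by gcongr; exact abs_sub_le s y x
        _ ≤ L * (|y - x| + b) := mul_le_mul_of_nonneg_left (by linarith) hL
  rwa [hlen, ← abin_eq_integral_div hb hF] at hbin

lemma abs_convex_combination_sub_le {p q v C u : ℝ} (hu : u ∈ Set.Icc (0 : ℝ) 1)
    (hp : |p - v| ≤ C) (hq : |q - v| ≤ C) : |(1 - u) * p + u * q - v| ≤ C := by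
  have hmem := convex_closedBall v C (Metric.mem_closedBall.mpr hp)
    (Metric.mem_closedBall.mpr hq) (sub_nonneg.mpr hu.2) hu.1 (sub_add_cancel 1 u)
  simpa only [Metric.mem_closedBall, Real.dist_eq, smul_eq_mul] using hmem

theorem bfp_approx_general (b : ℝ) (hb : 0 < b) (L : ℝ) (hL : 0 ≤ L) (f F : ℝ → ℝ)
    (hf : ∀ x y : ℝ, |f x - f y| ≤ L * |x - y|)
    (hF : ∀ x y : ℝ, x ≤ y → F y - F x = ∫ s in x..y, f s) :
    ∀ x : ℝ, |bfp b F x - f x| ≤ 3 * L * b := by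
  intro x
  have hleft := abs_abin_sub_le hb hL hf hF x (x - b / 2)
  have hright := abs_abin_sub_le hb hL hf hF x (x + b / 2)
  rw [sub_sub_cancel_left, abs_neg, abs_of_pos (half_pos hb)] at hleft
  rw [add_sub_cancel_left, abs_of_pos (half_pos hb)] at hright
  have hu := Set.Ico_subset_Icc_self (ub_mem_Ico b x)
  calc |bfp b F x - f x| ≤ L * (b / 2 + b) :=
        abs_convex_combination_sub_le hu hleft hright
    _ ≤ 3 * L * b := by nlinarith

/-- If `f` is bounded and `L`-Lipschitz and `F` is an antiderivative of `f`, then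
`‖B_b F - f‖_∞ ≤ 3 L b`. -/
theorem bfp_approx (b : ℝ) (hb : 0 < b) (L : ℝ) (hL : 0 ≤ L) (f F : ℝ → ℝ)
    (hfb : ∃ M : ℝ, ∀ x : ℝ, |f x| ≤ M)
    (hf : ∀ x y : ℝ, |f x - f y| ≤ L * |x - y|)
    (hF : ∀ x y : ℝ, x ≤ y → F y - F x = ∫ s in x..y, f s) :
    ∀ x : ℝ, |bfp b F x - f x| ≤ 3 * L * b :=
  bfp_approx_general b hb L hL f F hf hF
end

section
/- Let f : ℝ → ℝ be a bounded Lipschitz function with constant L, let F : ℝ → ℝ satisfy F(y) − F(x) = ∫_x^y f(s) ds for all x ≤ y, let (b_n) be positive reals and (F_n) a sequence of functions ℝ → ℝ, and set Δ_n(b) = sup{ √n·|(F_n − F)(u) − (F_n − F)(v)| : |u − v| ≤ b }. Then for every n ≥ 1, ‖B_{b_n} F_n − f‖_∞ ≤ 2·Δ_n(b_n)/(√n·b_n) + 3·L·b_n. In particular, if Δ_n(b_n) = O(√(b_n·log n)) + o(b_n·(log n)^{1/2}·log log n) and b_n = (n^{-1}·log n)^{1/3}, then ‖B_{b_n} F_n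 − f‖_∞ = O((n^{-1}·log n)^{1/3}) as n → ∞. -/
open Filter MeasureTheory ProbabilityTheory

lemma abin_bias (L b : ℝ) (hL : 0 ≤ L) (hb : 0 < b) (f F : ℝ → ℝ)
    (hf : ∀ x y : ℝ, |f x - f y| ≤ L * |x - y|)
    (hF : ∀ x y : ℝ, x ≤ y → F y - F x = ∫ s in x..y, f s)
    (y z : ℝ) : |abin b F y - f z| ≤ L * (|y - z| + b) := by
  have hfc : Continuous f := by
    have : LipschitzWith (Real.toNNReal L) f := by
      apply LipschitzWith.of_dist_le_mul
      intro a c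
      simpa [Real.dist_eq, Real.coe_toNNReal L hL] using hf a c
    exact this.continuous
  set k : ℝ := (⌊y / b⌋ : ℝ) with hk
  have hya : k * b ≤ y := by
    rw [← le_div_iff₀ hb]
    exact Int.floor_le (y / b)
  have hyc : y ≤ (k + 1) * b := by
    rw [← div_le_iff₀ hb]
    exact (Int.lt_floor_add_one (y / b)).le
  have hac : k * b ≤ (k + 1) * b := by nlinarith
  have hint : F ((k + 1) * b) - F (k * b) = ∫ s in (k * b)..((k + 1) * b), f s :=
    hF _ _ hac
  have hconst : ∫ s in (k * b)..((k + 1) * b), f z = b * f z := by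
    rw [intervalIntegral.integral_const]
    rw [smul_eq_mul]; ring_nf
  have hsub : abin b F y - f z = (∫ s in (k * b)..((k + 1) * b), (f s - f z)) / b := by
    rw [intervalIntegral.integral_sub (hfc.intervalIntegrable _ _)
      (intervalIntegrable_const), hconst]
    unfold abin
    rw [← hk, hint]
    field_simp
  rw [hsub]
  have hbound : |∫ s in (k * b)..((k + 1) * b), (f s - f z)| ≤
      (L * (|y - z| + b)) * |(k + 1) * b - k * b| := by
    rw [← Real.norm_eq_abs]
    apply intervalIntegral.norm_integral_le_of_norm_le_const
    intro s hs
    rw [Set.uIoc_of_le hac] at hs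
    have h1 : |f s - f z| ≤ L * |s - z| := hf s z
    have h2 : |s - z| ≤ |s - y| + |y - z| := abs_sub_le s y z
    have h3 : |s - y| ≤ b := by
      rw [abs_le]
      constructor <;> [linarith [hs.1.le]; linarith [hs.2]]
    have : L * |s - z| ≤ L * (|y - z| + b) := by
      apply mul_le_mul_of_nonneg_left _ hL
      linarith
    calc ‖f s - f z‖ = |f s - f z| := rfl
      _ ≤ L * |s - z| := h1
      _ ≤ L * (|y - z| + b) := this
  have hkb : |(k + 1) * b - k * b| = b := by
    rw [show (k + 1) * b - k * b = b by ring, abs_of_pos hb]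
  rw [hkb] at hbound
  rw [abs_div, abs_of_pos hb, div_le_iff₀ hb]
  exact hbound

/-- For the frequency polygon built from `F_n` with bin widths `b_n`:
`‖B_{b_n} F_n - f‖_∞ ≤ 2 Δ_n(b_n)/(√n b_n) + 3 L b_n` where `Δ_n(b_n)` dominates the
modulus of continuity of `√n (F_n - F)` at scale `b_n`; in particular, if
`Δ_n(b_n) = O(√(b_n log n)) + o(b_n (log n)^{1/2} log log n)` and
`b_n = (n⁻¹ log n)^{1/3}`, then `‖B_{b_n} F_n - f‖_∞ = O((n⁻¹ log n)^{1/3})`. -/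
theorem bfp_rate (L : ℝ) (hL : 0 ≤ L) (f F : ℝ → ℝ)
    (hfb : ∃ M : ℝ, ∀ x : ℝ, |f x| ≤ M)
    (hf : ∀ x y : ℝ, |f x - f y| ≤ L * |x - y|)
    (hF : ∀ x y : ℝ, x ≤ y → F y - F x = ∫ s in x..y, f s)
    (bn : ℕ → ℝ) (hbn : ∀ n, 0 < bn n)
    (Fn : ℕ → ℝ → ℝ) (Δ : ℕ → ℝ)
    (hΔ : ∀ n : ℕ, ∀ u v : ℝ, |u - v| ≤ bn n →
      Real.sqrt n * |(Fn n u - F u) - (Fn n v - F v)| ≤ Δ n) :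
    (∀ n : ℕ, 1 ≤ n → ∀ x : ℝ, |bfp (bn n) (Fn n) x - f x| ≤
        2 * Δ n / (Real.sqrt n * bn n) + 3 * L * bn n) ∧
    ((∃ C : ℝ, ∃ r : ℕ → ℝ, Tendsto r atTop (nhds 0) ∧
        ∀ᶠ n : ℕ in atTop, Δ n ≤ C * Real.sqrt (bn n * Real.log n) +
          r n * (bn n * (Real.log n) ^ ((1 : ℝ) / 2) * Real.log (Real.log n))) →
      (∀ n : ℕ, bn n = (Real.log n / n) ^ ((1 : ℝ) / 3)) →
      ∃ C : ℝ, ∀ᶠ n : ℕ in atTop, ∀ x : ℝ,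
        |bfp (bn n) (Fn n) x - f x| ≤ C * (Real.log n / n) ^ ((1 : ℝ) / 3)) := by
  have hΔ0 : ∀ n : ℕ, 0 ≤ Δ n := by
    intro n
    have := hΔ n 0 0 (by simpa using (hbn n).le)
    simpa using this
  have part1 : ∀ n : ℕ, 1 ≤ n → ∀ x : ℝ, |bfp (bn n) (Fn n) x - f x| ≤
      2 * Δ n / (Real.sqrt n * bn n) + 3 * L * bn n := by
    intro n hn x
    set b := bn n with hbdef
    have hb : 0 < b := hbn n
    have hsn : 1 ≤ Real.sqrt n := by
      rw [show (1:ℝ) = Real.sqrt 1 by simp]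
      exact Real.sqrt_le_sqrt (by exact_mod_cast hn)
    have hsn0 : 0 < Real.sqrt n := lt_of_lt_of_le one_pos hsn
    -- stochastic term
    have hstoch : ∀ y : ℝ, |abin b (Fn n) y - abin b F y| ≤ Δ n / (Real.sqrt n * b) := by
      intro y
      set k : ℝ := (⌊y / b⌋ : ℝ) with hk
      have hd : abin b (Fn n) y - abin b F y =
          ((Fn n ((k + 1) * b) - F ((k + 1) * b)) - (Fn n (k * b) - F (k * b))) / b := by
        unfold abin; rw [← hk]; ring
      have hdist : |(k + 1) * b - k * b| ≤ b := by
        rw [show (k + 1) * b - k * b = b by ring, abs_of_pos hb]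
      have hkey := hΔ n ((k + 1) * b) (k * b) hdist
      rw [hd, abs_div, abs_of_pos hb, div_le_div_iff₀ hb (by positivity)]
      nlinarith [hkey, hb.le]
    -- bias term
    have hbias1 : |abin b F (x - b / 2) - f x| ≤ L * (3 / 2 * b) := by
      have := abin_bias L b hL hb f F hf hF (x - b / 2) x
      have h1 : |x - b / 2 - x| = b / 2 := by
        rw [show x - b / 2 - x = -(b/2) by ring, abs_neg, abs_of_pos (by linarith)]
      rw [h1] at this
      calc |abin b F (x - b / 2) - f x| ≤ L * (b / 2 + b) := this
        _ = L * (3 / 2 * b) := by ring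
    have hbias2 : |abin b F (x + b / 2) - f x| ≤ L * (3 / 2 * b) := by
      have := abin_bias L b hL hb f F hf hF (x + b / 2) x
      have h1 : |x + b / 2 - x| = b / 2 := by
        rw [show x + b / 2 - x = b/2 by ring, abs_of_pos (by linarith)]
      rw [h1] at this
      calc |abin b F (x + b / 2) - f x| ≤ L * (b / 2 + b) := this
        _ = L * (3 / 2 * b) := by ring
    set u := ub b x with hu
    obtain ⟨hu0, hu1⟩ := ub_mem b x
    have hE : ∀ y : ℝ, |abin b (Fn n) y - f x| ≤ Δ n / (Real.sqrt n * b) + L * (3 / 2 * b) →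
        True := fun _ _ => trivial
    have h1 : |abin b (Fn n) (x - b / 2) - f x| ≤ Δ n / (Real.sqrt n * b) + L * (3 / 2 * b) := by
      calc |abin b (Fn n) (x - b / 2) - f x|
          ≤ |abin b (Fn n) (x - b / 2) - abin b F (x - b / 2)| + |abin b F (x - b / 2) - f x| := by
            have := abs_sub_le (abin b (Fn n) (x - b / 2)) (abin b F (x - b / 2)) (f x)
            exact this
        _ ≤ Δ n / (Real.sqrt n * b) + L * (3 / 2 * b) := add_le_add (hstoch _) hbias1
    have h2 : |abin b (Fn n) (x + b / 2) - f x| ≤ Δ n / (Real.sqrt n * b) + L * (3 / 2 * b) := by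
      calc |abin b (Fn n) (x + b / 2) - f x|
          ≤ |abin b (Fn n) (x + b / 2) - abin b F (x + b / 2)| + |abin b F (x + b / 2) - f x| :=
            abs_sub_le _ _ _
        _ ≤ Δ n / (Real.sqrt n * b) + L * (3 / 2 * b) := add_le_add (hstoch _) hbias2
    have hsplit : bfp b (Fn n) x - f x =
        (1 - u) * (abin b (Fn n) (x - b / 2) - f x) + u * (abin b (Fn n) (x + b / 2) - f x) := by
      unfold bfp; rw [← hu]; ring
    have hDpos : 0 ≤ Δ n / (Real.sqrt n * b) := div_nonneg (hΔ0 n) (mul_pos hsn0 hb).le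
    calc |bfp b (Fn n) x - f x|
        ≤ (1 - u) * |abin b (Fn n) (x - b / 2) - f x| + u * |abin b (Fn n) (x + b / 2) - f x| := by
          rw [hsplit]
          calc |(1 - u) * (abin b (Fn n) (x - b / 2) - f x) +
                u * (abin b (Fn n) (x + b / 2) - f x)|
              ≤ |(1 - u) * (abin b (Fn n) (x - b / 2) - f x)| +
                |u * (abin b (Fn n) (x + b / 2) - f x)| := abs_add_le _ _
            _ = (1 - u) * |abin b (Fn n) (x - b / 2) - f x| +
                u * |abin b (Fn n) (x + b / 2) - f x| := by
                rw [abs_mul, abs_mul, abs_of_nonneg (by linarith : (0:ℝ) ≤ 1 - u),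
                  abs_of_nonneg hu0]
      _ ≤ (1 - u) * (Δ n / (Real.sqrt n * b) + L * (3 / 2 * b)) +
            u * (Δ n / (Real.sqrt n * b) + L * (3 / 2 * b)) := by
          apply add_le_add
          · exact mul_le_mul_of_nonneg_left h1 (by linarith)
          · exact mul_le_mul_of_nonneg_left h2 hu0
      _ = Δ n / (Real.sqrt n * b) + L * (3 / 2 * b) := by ring
      _ ≤ 2 * Δ n / (Real.sqrt n * b) + 3 * L * b := by
          have : Δ n / (Real.sqrt n * b) ≤ 2 * Δ n / (Real.sqrt n * b) := by
            rw [div_le_div_iff₀ (mul_pos hsn0 hb) (mul_pos hsn0 hb)]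
            nlinarith [hΔ0 n, mul_pos hsn0 hb]
          nlinarith [hb.le, hL]
  refine ⟨part1, ?_⟩
  rintro ⟨C, r, hr, hCr⟩ hbn'
  refine ⟨2 * |C| + 2 + 3 * L, ?_⟩
  -- eventual facts
  have hlogbig : ∀ᶠ n : ℕ in atTop, (1 : ℝ) ≤ Real.log n :=
    (Real.tendsto_log_atTop.comp tendsto_natCast_atTop_atTop).eventually_ge_atTop 1
  have hlog7' : ∀ᶠ x : ℝ in atTop, Real.log x ≤ x ^ ((1:ℝ)/7) := by
    filter_upwards [(isLittleO_log_rpow_atTop (by norm_num : (0:ℝ) < 1/7)).def one_pos,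
      eventually_ge_atTop (1:ℝ)] with x hx hx1
    have : Real.log x ≤ |Real.log x| := le_abs_self _
    calc Real.log x ≤ |Real.log x| := le_abs_self _
      _ ≤ 1 * |x ^ ((1:ℝ)/7)| := hx
      _ = x ^ ((1:ℝ)/7) := by
          rw [one_mul, abs_of_nonneg (Real.rpow_nonneg (by linarith) _)]
  have hlog7 : ∀ᶠ n : ℕ in atTop, Real.log n ≤ (n:ℝ) ^ ((1:ℝ)/7) :=
    tendsto_natCast_atTop_atTop.eventually hlog7'
  have hrsmall : ∀ᶠ n : ℕ in atTop, |r n| ≤ 1 := by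
    have : Tendsto (fun n => |r n|) atTop (nhds 0) := by
      have := hr.abs
      simpa using this
    filter_upwards [this.eventually_le_const (by norm_num : (0:ℝ) < 1)] with n hn
    exact hn
  filter_upwards [hlogbig, hlog7, hrsmall, hCr, eventually_ge_atTop 1] with n hℓ1 hℓ7 hrn hΔn hn1
  intro x
  set ℓ : ℝ := Real.log n with hℓdef
  have hnpos : (0:ℝ) < n := by exact_mod_cast hn1
  have hℓpos : 0 < ℓ := lt_of_lt_of_le one_pos hℓ1
  set p : ℝ := ℓ / n with hpdef
  have hp : 0 < p := div_pos hℓpos hnpos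
  have hbval : bn n = p ^ ((1:ℝ)/3) := hbn' n
  set b := bn n with hbdef
  have hb : 0 < b := hbn n
  have hsn : 0 < Real.sqrt n := Real.sqrt_pos.mpr hnpos
  -- identity : sqrt (b * ℓ) = sqrt n * b ^ 2
  have hb2 : b ^ 2 = p ^ ((2:ℝ)/3) := by
    rw [hbval, ← Real.rpow_natCast (p ^ ((1:ℝ)/3)) 2, ← Real.rpow_mul hp.le]
    norm_num
  have hℓeq : ℓ = p * n := by
    rw [hpdef]; field_simp
  have hbl : b * ℓ = p ^ ((4:ℝ)/3) * n := by
    rw [hbval, hℓeq, ← mul_assoc,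
      show p ^ ((1:ℝ)/3) * p = p ^ ((4:ℝ)/3) by
        rw [show (4:ℝ)/3 = 1/3 + 1 by norm_num, Real.rpow_add hp, Real.rpow_one]]
  have hA : Real.sqrt (b * ℓ) = Real.sqrt n * b ^ 2 := by
    rw [hbl, Real.sqrt_mul (Real.rpow_nonneg hp.le _), hb2,
      show Real.sqrt (p ^ ((4:ℝ)/3)) = p ^ ((2:ℝ)/3) by
        rw [Real.sqrt_eq_rpow, ← Real.rpow_mul hp.le]; norm_num]
    ring
  -- bound : b * ℓ^{1/2} * log ℓ ≤ sqrt n * b ^ 2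
  have hlogℓ : Real.log ℓ ≤ ℓ := by
    have := Real.log_le_sub_one_of_pos hℓpos
    linarith
  have hlogℓ0 : 0 ≤ Real.log ℓ := Real.log_nonneg hℓ1
  have hB : b * ℓ ^ ((1:ℝ)/2) * Real.log ℓ ≤ Real.sqrt n * b ^ 2 := by
    have hX : ℓ ^ ((1:ℝ)/2) * Real.log ℓ ≤ Real.sqrt n * b := by
      have hsnb : Real.sqrt n * b = (n:ℝ) ^ ((1:ℝ)/6) * ℓ ^ ((1:ℝ)/3) := by
        rw [hbval, hpdef, Real.div_rpow hℓpos.le hnpos.le, Real.sqrt_eq_rpow]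
        rw [mul_div_assoc', mul_comm ((n:ℝ) ^ ((1:ℝ)/2)) (ℓ ^ ((1:ℝ)/3)), mul_div_assoc,
          ← Real.rpow_sub hnpos]
        norm_num
        ring
      rw [hsnb]
      calc ℓ ^ ((1:ℝ)/2) * Real.log ℓ ≤ ℓ ^ ((1:ℝ)/2) * ℓ := by
            exact mul_le_mul_of_nonneg_left hlogℓ (Real.rpow_nonneg hℓpos.le _)
        _ = ℓ ^ ((1:ℝ)/3) * ℓ ^ ((7:ℝ)/6) := by
            have e1 : ℓ ^ ((1:ℝ)/2) * ℓ = ℓ ^ ((3:ℝ)/2) := by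
              nth_rewrite 2 [← Real.rpow_one ℓ]
              rw [← Real.rpow_add hℓpos]; norm_num
            have e2 : ℓ ^ ((1:ℝ)/3) * ℓ ^ ((7:ℝ)/6) = ℓ ^ ((3:ℝ)/2) := by
              rw [← Real.rpow_add hℓpos]; norm_num
            rw [e1, e2]
        _ ≤ ℓ ^ ((1:ℝ)/3) * (n:ℝ) ^ ((1:ℝ)/6) := by
            apply mul_le_mul_of_nonneg_left _ (Real.rpow_nonneg hℓpos.le _)
            calc ℓ ^ ((7:ℝ)/6) ≤ ((n:ℝ) ^ ((1:ℝ)/7)) ^ ((7:ℝ)/6) :=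
                  Real.rpow_le_rpow hℓpos.le hℓ7 (by norm_num)
              _ = (n:ℝ) ^ ((1:ℝ)/6) := by
                  rw [← Real.rpow_mul hnpos.le]; norm_num
        _ = (n:ℝ) ^ ((1:ℝ)/6) * ℓ ^ ((1:ℝ)/3) := by ring
    calc b * ℓ ^ ((1:ℝ)/2) * Real.log ℓ = b * (ℓ ^ ((1:ℝ)/2) * Real.log ℓ) := by ring
      _ ≤ b * (Real.sqrt n * b) := mul_le_mul_of_nonneg_left hX hb.le
      _ = Real.sqrt n * b ^ 2 := by ring
  -- combine : Δ n ≤ (|C| + 1) * sqrt n * b ^ 2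
  have hΔbound : Δ n ≤ (|C| + 1) * (Real.sqrt n * b ^ 2) := by
    have ht2 : 0 ≤ b * ℓ ^ ((1:ℝ)/2) * Real.log ℓ := by positivity
    calc Δ n ≤ C * Real.sqrt (b * ℓ) + r n * (b * ℓ ^ ((1:ℝ)/2) * Real.log ℓ) := hΔn
      _ ≤ |C| * Real.sqrt (b * ℓ) + 1 * (b * ℓ ^ ((1:ℝ)/2) * Real.log ℓ) := by
          apply add_le_add
          · exact mul_le_mul_of_nonneg_right (le_abs_self C) (Real.sqrt_nonneg _)
          · calc r n * (b * ℓ ^ ((1:ℝ)/2) * Real.log ℓ)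
                ≤ |r n| * (b * ℓ ^ ((1:ℝ)/2) * Real.log ℓ) :=
                  mul_le_mul_of_nonneg_right (le_abs_self _) ht2
              _ ≤ 1 * (b * ℓ ^ ((1:ℝ)/2) * Real.log ℓ) :=
                  mul_le_mul_of_nonneg_right hrn ht2
      _ ≤ |C| * (Real.sqrt n * b ^ 2) + 1 * (Real.sqrt n * b ^ 2) := by
          apply add_le_add
          · rw [hA]
          · rw [one_mul, one_mul]; exact hB
      _ = (|C| + 1) * (Real.sqrt n * b ^ 2) := by ring
  -- conclude
  have hmain := part1 n hn1 x
  have hfin : 2 * Δ n / (Real.sqrt n * b) ≤ (2 * |C| + 2) * b := by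
    rw [div_le_iff₀ (by positivity)]
    nlinarith [hΔbound, hb.le, hsn.le, abs_nonneg C]
  rw [← hbval]
  calc |bfp b (Fn n) x - f x| ≤ 2 * Δ n / (Real.sqrt n * b) + 3 * L * b := hmain
    _ ≤ (2 * |C| + 2) * b + 3 * L * b := by linarith
    _ = (2 * |C| + 2 + 3 * L) * b := by ring
end

section
/- Let f : ℝ → ℝ be a bounded Lipschitz function with constant L, let F satisfy F(y) − F(x) = ∫_x^y f(s) ds for all x ≤ y, let (b_n) be positive reals with b_n → 0, let (F_n) be functions ℝ → ℝ, and set Δ_n(b) = sup{ √n·|(F_n − F)(u) − (F_n − F)(v)| : |u − v| ≤ b }. If Δ_n(b_n)/√(b_n·log n) is bounded, Δ_n(b_n)/(b_n·(log n)^{1/2}·log log n) → 0, and n·b_n/log n → ∞, then ‖B_{b_n} F_n − f‖_∞ → 0 as n → ∞. -/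
open Filter MeasureTheory ProbabilityTheory

/-!
By linearity, `B_b F_n - f = B_b (F_n - F) + (B_b F - f)`, and `B_b` takes convex combinations
of the bin averages `A_b`. The bias `B_b F - f` is an average of `f - f x` over points within
`2b` of `x`, hence at most `2 L b`. A bin average of `F_n - F` is its increment over one bin
divided by `b`, hence at most `Δ_n / (√n b_n) ≤ C √(log n / (n b_n)) → 0`.
-/

open Set Topology
open scoped NNReal

lemma ub_mem_Icc (b x : ℝ) : ub b x ∈ Icc 0 1 := by
  have hfloor : ⌊x / b + 1 / 2⌋ = ⌊x / b - 1 / 2⌋ + 1 := by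
    rw [show x / b + 1 / 2 = (x / b - 1 / 2) + 1 by ring, Int.floor_add_one]
  have h₁ := Int.floor_le (x / b - 1 / 2)
  have h₂ := Int.lt_floor_add_one (x / b - 1 / 2)
  simp only [ub, hfloor, Int.cast_add, Int.cast_one, mem_Icc]
  constructor <;> linarith

lemma abs_bfp_sub_le {b x c M : ℝ} {F : ℝ → ℝ}
    (hl : |abin b F (x - b / 2) - c| ≤ M) (hr : |abin b F (x + b / 2) - c| ≤ M) :
    |bfp b F x - c| ≤ M := by
  obtain ⟨hu₀, hu₁⟩ := ub_mem_Icc b x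
  have hsplit : bfp b F x - c =
      (1 - ub b x) * (abin b F (x - b / 2) - c) + ub b x * (abin b F (x + b / 2) - c) := by
    unfold bfp; ring
  calc |bfp b F x - c|
      ≤ (1 - ub b x) * |abin b F (x - b / 2) - c| + ub b x * |abin b F (x + b / 2) - c| := by
        rw [hsplit]
        refine (abs_add_le _ _).trans_eq ?_
        rw [abs_mul, abs_mul, abs_of_nonneg (sub_nonneg.2 hu₁), abs_of_nonneg hu₀]
    _ ≤ (1 - ub b x) * M + ub b x * M := by gcongr
    _ = M := by ring

lemma bfp_sub (b : ℝ) (F G : ℝ → ℝ) (x : ℝ) : bfp b G x - bfp b F x = bfp b (G - F) x := by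
  simp only [bfp, abin, Pi.sub_apply]; ring

lemma abs_abin_le {b D : ℝ} (hb : 0 < b) {H : ℝ → ℝ}
    (hH : ∀ u v, |u - v| ≤ b → |H u - H v| ≤ D) (x : ℝ) : |abin b H x| ≤ D / b := by
  rw [abin, abs_div, abs_of_pos hb]
  gcongr
  exact hH _ _ (by rw [add_mul, one_mul, add_sub_cancel_left, abs_of_pos hb])

lemma abs_bfp_le {b D : ℝ} (hb : 0 < b) {H : ℝ → ℝ}
    (hH : ∀ u v, |u - v| ≤ b → |H u - H v| ≤ D) (x : ℝ) : |bfp b H x| ≤ D / b := by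
  simpa using abs_bfp_sub_le (c := 0) (by simpa using abs_abin_le hb hH _)
    (by simpa using abs_abin_le hb hH _)

lemma abs_abin_sub_le_of_lipschitzWith {K : ℝ≥0} {f F : ℝ → ℝ} (hf : LipschitzWith K f)
    (hF : ∀ x y, x ≤ y → F y - F x = ∫ s in x..y, f s) {b : ℝ} (hb : 0 < b) {x y : ℝ}
    (hxy : |x - y| ≤ b) : |abin b F x - f y| ≤ 2 * K * b := by
  set a : ℝ := ⌊x / b⌋ * b
  have hax : a ≤ x := (le_div_iff₀ hb).1 (Int.floor_le _)
  have hxa : x < a + b := by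
    have := (div_lt_iff₀ hb).1 (Int.lt_floor_add_one (x / b)); linarith
  have hbound : ∀ s ∈ uIoc a (a + b), ‖f s - f y‖ ≤ 2 * K * b := by
    intro s hs
    rw [uIoc_of_le (by linarith)] at hs
    have hsy : |s - y| ≤ 2 * b := by
      have := abs_sub_le s x y
      have : |s - x| ≤ b := abs_le.2 ⟨by linarith [hs.1], by linarith [hs.2]⟩
      linarith
    calc ‖f s - f y‖ = dist (f s) (f y) := rfl
      _ ≤ K * dist s y := hf.dist_le_mul s y
      _ ≤ K * (2 * b) := by rw [Real.dist_eq]; gcongr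
      _ = 2 * K * b := by ring
  have hint := intervalIntegral.norm_integral_le_of_norm_le_const hbound
  rw [intervalIntegral.integral_sub (hf.continuous.intervalIntegrable _ _)
    intervalIntegrable_const, intervalIntegral.integral_const, smul_eq_mul, add_sub_cancel_left,
    ← hF a (a + b) (by linarith), abs_of_pos hb] at hint
  have habin : abin b F x - f y = (F (a + b) - F a - b * f y) / b := by
    rw [abin, add_mul, one_mul, eq_div_iff hb.ne', sub_mul, div_mul_cancel₀ _ hb.ne', mul_comm (f y)]
  rw [habin, abs_div, abs_of_pos hb, div_le_iff₀ hb]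
  exact hint

lemma abs_bfp_sub_le_of_lipschitzWith {K : ℝ≥0} {f F : ℝ → ℝ} (hf : LipschitzWith K f)
    (hF : ∀ x y, x ≤ y → F y - F x = ∫ s in x..y, f s) {b : ℝ} (hb : 0 < b) (x : ℝ) :
    |bfp b F x - f x| ≤ 2 * K * b := by
  have hhalf : |b / 2| ≤ b := by rw [abs_of_pos (half_pos hb)]; linarith
  apply abs_bfp_sub_le <;> apply abs_abin_sub_le_of_lipschitzWith hf hF hb
  · simpa using hhalf
  · simpa using hhalf

lemma abs_bfp_sub_le_add {K : ℝ≥0} {f F G : ℝ → ℝ} (hf : LipschitzWith K f)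
    (hF : ∀ x y, x ≤ y → F y - F x = ∫ s in x..y, f s) {b D : ℝ} (hb : 0 < b)
    (hD : ∀ u v, |u - v| ≤ b → |(G - F) u - (G - F) v| ≤ D) (x : ℝ) :
    |bfp b G x - f x| ≤ 2 * K * b + D / b := by
  calc |bfp b G x - f x| = |(bfp b F x - f x) + bfp b (G - F) x| := by
        rw [← bfp_sub]; ring_nf
    _ ≤ |bfp b F x - f x| + |bfp b (G - F) x| := abs_add_le _ _
    _ ≤ 2 * K * b + D / b :=
        add_le_add (abs_bfp_sub_le_of_lipschitzWith hf hF hb x) (abs_bfp_le hb hD x)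

lemma tendstoUniformly_of_dist_le {ι α β : Type*} [PseudoMetricSpace β] {l : Filter ι}
    {F : ι → α → β} {f : α → β} {ε : ι → ℝ} (hε : Tendsto ε l (𝓝 0))
    (hF : ∀ᶠ i in l, ∀ x, dist (f x) (F i x) ≤ ε i) : TendstoUniformly F f l :=
  Metric.tendstoUniformly_iff.2 fun δ hδ => by
    filter_upwards [hF, hε.eventually_lt_const hδ] with i hi hεi x
    exact (hi x).trans_lt hεi

lemma tendsto_div_sqrt_mul_of_le {b Δ : ℕ → ℝ} (hb : ∀ n, 0 < b n) (hΔ : ∀ n, 0 ≤ Δ n)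
    {C : ℝ} (hC : ∀ n, Δ n / √(b n * Real.log n) ≤ C)
    (hnb : Tendsto (fun n : ℕ => n * b n / Real.log n) atTop atTop) :
    Tendsto (fun n : ℕ => Δ n / (√n * b n)) atTop (𝓝 0) := by
  have hlim : Tendsto (fun n : ℕ => C * √((n * b n / Real.log n)⁻¹)) atTop (𝓝 0) := by
    simpa using (hnb.inv_tendsto_atTop.sqrt).const_mul C
  refine tendsto_of_tendsto_of_tendsto_of_le_of_le' tendsto_const_nhds hlim
    (Eventually.of_forall fun n => by have := hb n; have := hΔ n; positivity) ?_
  filter_upwards [eventually_ge_atTop 2] with n hn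
  have hlog : 0 < Real.log n := Real.log_pos (by exact_mod_cast hn)
  have hbn := hb n
  have hsqrt : √(b n * Real.log n) / (√n * b n) = √((n * b n / Real.log n)⁻¹) := by
    rw [inv_div, Real.sqrt_div hlog.le, Real.sqrt_mul (Nat.cast_nonneg n), Real.sqrt_mul hbn.le]
    have hsq := Real.mul_self_sqrt hbn.le
    have : 0 < √(b n) := Real.sqrt_pos.2 hbn
    field_simp
    linear_combination hsq
  have hpos : 0 < √(b n * Real.log n) := by positivity
  calc Δ n / (√n * b n) = Δ n / √(b n * Real.log n) * (√(b n * Real.log n) / (√n * b n)) := by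
        field_simp
    _ ≤ C * √((n * b n / Real.log n)⁻¹) := by rw [hsqrt]; gcongr; exact hC n

theorem bfp_uniform_consistency_general (L : ℝ) (f F : ℝ → ℝ)
    (hf : ∀ x y : ℝ, |f x - f y| ≤ L * |x - y|)
    (hF : ∀ x y : ℝ, x ≤ y → F y - F x = ∫ s in x..y, f s)
    (bn : ℕ → ℝ) (hbn : ∀ n, 0 < bn n)
    (hbn0 : Tendsto bn atTop (nhds 0))
    (Fn : ℕ → ℝ → ℝ) (Δ : ℕ → ℝ)
    (hΔ : ∀ n : ℕ, ∀ u v : ℝ, |u - v| ≤ bn n →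
      Real.sqrt n * |(Fn n u - F u) - (Fn n v - F v)| ≤ Δ n)
    (hΔO : ∃ C : ℝ, ∀ n : ℕ, Δ n / Real.sqrt (bn n * Real.log n) ≤ C)
    (hnb : Tendsto (fun n : ℕ => n * bn n / Real.log n) atTop atTop) :
    TendstoUniformly (fun n : ℕ => bfp (bn n) (Fn n)) f atTop := by
  have hlip : LipschitzWith L.toNNReal f :=
    LipschitzWith.of_dist_le' fun x y => by simpa only [Real.dist_eq] using hf x y
  obtain ⟨C, hC⟩ := hΔO
  have hΔ₀ (n : ℕ) : 0 ≤ Δ n := by simpa using hΔ n 0 0 (by simpa using (hbn n).le)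
  have hbias : Tendsto (fun n => 2 * (L.toNNReal : ℝ) * bn n) atTop (𝓝 0) := by
    simpa using hbn0.const_mul _
  have hrate := hbias.add (tendsto_div_sqrt_mul_of_le hbn hΔ₀ hC hnb)
  rw [add_zero] at hrate
  refine tendstoUniformly_of_dist_le hrate ?_
  filter_upwards [eventually_ge_atTop 1] with n hn x
  have hsqrt : 0 < √(n : ℝ) := Real.sqrt_pos.2 (by exact_mod_cast hn)
  have hD (u v : ℝ) (huv : |u - v| ≤ bn n) : |(Fn n - F) u - (Fn n - F) v| ≤ Δ n / √n :=
    (le_div_iff₀' hsqrt).2 (hΔ n u v huv)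
  rw [Real.dist_eq, abs_sub_comm, ← div_div]
  exact abs_bfp_sub_le_add hlip hF (hbn n) hD x

/-- Uniform consistency of the frequency polygon: if the modulus of continuity
`Δ_n(b_n)` of `√n (F_n - F)` satisfies `Δ_n(b_n) = O(√(b_n log n))` and
`Δ_n(b_n) = o(b_n (log n)^{1/2} log log n)`, with `b_n → 0` and `n b_n / log n → ∞`,
then `‖B_{b_n} F_n - f‖_∞ → 0`. -/
theorem bfp_uniform_consistency (L : ℝ) (hL : 0 ≤ L) (f F : ℝ → ℝ)
    (hfb : ∃ M : ℝ, ∀ x : ℝ, |f x| ≤ M)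
    (hf : ∀ x y : ℝ, |f x - f y| ≤ L * |x - y|)
    (hF : ∀ x y : ℝ, x ≤ y → F y - F x = ∫ s in x..y, f s)
    (bn : ℕ → ℝ) (hbn : ∀ n, 0 < bn n)
    (hbn0 : Tendsto bn atTop (nhds 0))
    (Fn : ℕ → ℝ → ℝ) (Δ : ℕ → ℝ)
    (hΔ : ∀ n : ℕ, ∀ u v : ℝ, |u - v| ≤ bn n →
      Real.sqrt n * |(Fn n u - F u) - (Fn n v - F v)| ≤ Δ n)
    (hΔO : ∃ C : ℝ, ∀ n : ℕ, Δ n / Real.sqrt (bn n * Real.log n) ≤ C)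
    (hΔo : Tendsto
      (fun n : ℕ => Δ n / (bn n * (Real.log n) ^ ((1 : ℝ) / 2) * Real.log (Real.log n)))
      atTop (nhds 0))
    (hnb : Tendsto (fun n : ℕ => n * bn n / Real.log n) atTop atTop) :
    TendstoUniformly (fun n : ℕ => bfp (bn n) (Fn n)) f atTop :=
  bfp_uniform_consistency_general L f F hf hF bn hbn hbn0 Fn Δ hΔ hΔO hnb
end
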